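/- The function f(r) := ((r²+a²)/Δ(r))·(√(1 − a²Δ(r)/(r²+a²)²) − 1), a priori defined for r > r₊, extends to a real-analytic function on (r₋,∞) (the apparent singularity at Δ = 0 is removable). Consequently, for r > r₊ one has the identity (r−r₊)·e^{−2κ₊·k(r_*(r))} = e^{−2κ₊(r+R₀)}·(r−r₋)^{κ₊/κ₋}·e^{−2κ₊∫_{r₊}^r f(τ)dτ}, and hence the function r ↦ (r−r₊)·e^{−2κ₊·k(r_*(r))} extends to a strictly positive real-analytic function on (r₋,∞); equivalently, the Kruskal-type quantity L = (r−r₊)/(UV), with UV = e^{2κ₊(k(r_*(r))+a·sinθ)}, extends analytically and without zeros across the outer horizon {r = r₊}. -/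

import Mathlib

/-!
Multiplying `√(1 − a²Δ/(r²+a²)²) − 1` by `√(1 − a²Δ/(r²+a²)²) + 1` cancels the factor `Δ` in `f`,
leaving `−a² / ((r²+a²)(√(1 − a²Δ/(r²+a²)²) + 1))`, which is analytic wherever the radicand is
positive; on `(r₋, ∞)` it is, because after eliminating `Q²` through `Δ(r₋) = 0` the quantity
`(r²+a²)² − a²Δ(r)` becomes `r⁴ + a²r² + 2Ma²(r − r₋) + a²r₋² + a⁴`.

In `−2κ₊ k(r_*(r))` the term `log(r − r₊)/(2κ₊)` of `r_*` contributes the factor `1/(r − r₊)`,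
which cancels the prefactor `r − r₊`. What is left is a product of `(r − r₋)^{κ₊/κ₋}` and
exponentials of analytic functions, one of them the primitive `∫_{r₊}^r f`; a primitive of an
analytic function is analytic, as the termwise integrated power series shows.
-/

noncomputable section
open Real Set

namespace Stmt18

/-- `Δ(r) = r² − 2Mr + a² + Q²`. -/
def Δ (M a Q r : ℝ) : ℝ := r ^ 2 - 2 * M * r + a ^ 2 + Q ^ 2

/-- Outer horizon `r₊`. -/
def rplus (M a Q : ℝ) : ℝ := M + Real.sqrt (M ^ 2 - (a ^ 2 + Q ^ 2))

/-- Inner horizon `r₋`. -/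
def rminus (M a Q : ℝ) : ℝ := M - Real.sqrt (M ^ 2 - (a ^ 2 + Q ^ 2))

/-- Surface gravity of the outer horizon. -/
def κplus (M a Q : ℝ) : ℝ :=
  (rplus M a Q - rminus M a Q) / (2 * ((rplus M a Q) ^ 2 + a ^ 2))

/-- Surface gravity of the inner horizon. -/
def κminus (M a Q : ℝ) : ℝ :=
  (rplus M a Q - rminus M a Q) / (2 * ((rminus M a Q) ^ 2 + a ^ 2))

/-- The Regge–Wheeler coordinate. -/
def rstar (M a Q R0 r : ℝ) : ℝ :=
  r + (1 / (2 * κplus M a Q)) * Real.log (r - rplus M a Q)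
    - (1 / (2 * κminus M a Q)) * Real.log (r - rminus M a Q) + R0

/-- `f(r) = ((r²+a²)/Δ(r))·(√(1 − a²Δ(r)/(r²+a²)²) − 1)`. -/
def fKN (M a Q r : ℝ) : ℝ :=
  ((r ^ 2 + a ^ 2) / Δ M a Q r)
    * (Real.sqrt (1 - a ^ 2 * Δ M a Q r / (r ^ 2 + a ^ 2) ^ 2) - 1)

/-- `k(r_*(r)) = r_*(r) + ∫_{r₊}^r (√(1−a²Δ/(τ²+a²)²)−1)((τ²+a²)/Δ(τ))dτ
             = r_*(r) + ∫_{r₊}^r f(τ)dτ`. -/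
def kofr (M a Q R0 r : ℝ) : ℝ :=
  rstar M a Q R0 r + ∫ τ in (rplus M a Q)..r, fKN M a Q τ

end Stmt18

open Filter Topology
open scoped ContDiff

namespace FormalMultilinearSeries

variable {𝕜 : Type*} [RCLike 𝕜]

-- `ℕ`-subtraction and `x / 0 = 0` make the constant coefficient vanish.
noncomputable def primitive (p : FormalMultilinearSeries 𝕜 𝕜 𝕜) : FormalMultilinearSeries 𝕜 𝕜 𝕜 :=
  ofScalars 𝕜 fun n => p.coeff (n - 1) / n

variable (p : FormalMultilinearSeries 𝕜 𝕜 𝕜)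

@[simp]
lemma coeff_primitive_zero : p.primitive.coeff 0 = 0 := by
  simp [primitive, coeff_ofScalars]

@[simp]
lemma coeff_primitive_succ (n : ℕ) : p.primitive.coeff (n + 1) = p.coeff n / (n + 1) := by
  simp [primitive, coeff_ofScalars]

lemma radius_le_radius_primitive : p.radius ≤ p.primitive.radius := by
  refine ENNReal.le_of_forall_nnreal_lt fun r hr => ?_
  obtain ⟨C, hC0, hC⟩ := p.norm_mul_pow_le_of_lt_radius hr
  refine p.primitive.le_radius_of_bound (C * r) fun n => ?_
  rcases n with _ | n
  · simp only [norm_apply_eq_norm_coef, coeff_primitive_zero, norm_zero, zero_mul]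
    positivity
  calc ‖p.primitive (n + 1)‖ * (r : ℝ) ^ (n + 1)
      = ‖p n‖ / (n + 1) * (r : ℝ) ^ n * r := by
        rw [norm_apply_eq_norm_coef, norm_apply_eq_norm_coef, coeff_primitive_succ, norm_div,
          ← Nat.cast_add_one, RCLike.norm_natCast]
        push_cast
        ring
    _ ≤ ‖p n‖ * (r : ℝ) ^ n * r := by
        gcongr
        exact div_le_self (norm_nonneg _) (by linarith)
    _ ≤ C * r := by gcongr; exact hC n

lemma hasDerivAt_sum_primitive {y : 𝕜} (hy : y ∈ Metric.eball 0 p.radius) :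
    HasDerivAt p.primitive.sum (p.sum y) y := by
  have hy' : y ∈ Metric.eball 0 p.primitive.radius :=
    Metric.eball_subset_eball p.radius_le_radius_primitive hy
  have hq : HasFPowerSeriesOnBall p.primitive.sum p.primitive 0 p.primitive.radius :=
    p.primitive.hasFPowerSeriesOnBall (bot_le.trans_lt (Metric.mem_eball.1 hy'))
  have hderiv : HasSum (fun n => p.primitive.derivSeries n (fun _ => y) 1)
      (fderiv 𝕜 p.primitive.sum y 1) := by
    simpa using (ContinuousLinearMap.apply 𝕜 𝕜 (1 : 𝕜)).hasSum (hq.fderiv.hasSum hy')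
  have hterm : ∀ n, p.primitive.derivSeries n (fun _ => y) 1 = p n fun _ => y := by
    intro n
    rw [apply_eq_pow_smul_coeff, apply_eq_pow_smul_coeff, _root_.smul_apply,
      derivSeries_coeff_one, coeff_primitive_succ, nsmul_eq_mul]
    push_cast
    field_simp
  rw [(p.hasSum hy).unique (by simpa only [hterm] using hderiv)]
  simpa using (hq.analyticAt_of_mem hy').differentiableAt.hasDerivAt

end FormalMultilinearSeries

section Primitive

variable {𝕜 : Type*} [RCLike 𝕜]

theorem AnalyticAt.exists_primitive {g : 𝕜 → 𝕜} {x₀ : 𝕜} (hg : AnalyticAt 𝕜 g x₀) :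
    ∃ h : 𝕜 → 𝕜, AnalyticAt 𝕜 h x₀ ∧ ∀ᶠ x in 𝓝 x₀, HasDerivAt h (g x) x := by
  obtain ⟨p, r, hp⟩ := hg
  have hq := p.primitive.hasFPowerSeriesOnBall
    (hp.r_pos.trans_le (hp.r_le.trans p.radius_le_radius_primitive))
  refine ⟨fun x => p.primitive.sum (x - x₀), ?_, ?_⟩
  · have h0 : AnalyticAt 𝕜 p.primitive.sum (x₀ - x₀) := by rw [sub_self]; exact hq.analyticAt
    exact h0.comp (f := fun x => x - x₀) (analyticAt_id.sub analyticAt_const)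
  · filter_upwards [Metric.eball_mem_nhds x₀ hp.r_pos] with x hx
    have hy : x - x₀ ∈ Metric.eball 0 r := by
      simpa [Metric.mem_eball, edist_dist, dist_eq_norm] using hx
    have := (p.hasDerivAt_sum_primitive (Metric.eball_subset_eball hp.r_le hy)).comp_sub_const x x₀
    rwa [← hp.sum hy, add_sub_cancel] at this

theorem AnalyticAt.of_eventually_hasDerivAt {F g : 𝕜 → 𝕜} {x₀ : 𝕜} (hg : AnalyticAt 𝕜 g x₀)
    (hF : ∀ᶠ x in 𝓝 x₀, HasDerivAt F (g x) x) : AnalyticAt 𝕜 F x₀ := by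
  obtain ⟨h, hh, hh'⟩ := hg.exists_primitive
  obtain ⟨ε, hε, hball⟩ := Metric.eventually_nhds_iff_ball.1 (hF.and hh')
  obtain ⟨c, hc⟩ := Metric.isOpen_ball.exists_eq_add_of_deriv_eq
    (convex_ball x₀ ε).isPreconnected
    (fun x hx => (hball x hx).1.differentiableAt.differentiableWithinAt)
    (fun x hx => (hball x hx).2.differentiableAt.differentiableWithinAt)
    (fun x hx => (hball x hx).1.deriv.trans (hball x hx).2.deriv.symm)
  exact (hh.add analyticAt_const).congr (eventuallyEq_of_mem (Metric.ball_mem_nhds x₀ hε) hc).symm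

end Primitive

theorem AnalyticOnNhd.intervalIntegral {g : ℝ → ℝ} {s : Set ℝ} (hs : IsOpen s)
    (hs' : s.OrdConnected) (hg : AnalyticOnNhd ℝ g s) {c : ℝ} (hc : c ∈ s) :
    AnalyticOnNhd ℝ (fun x => ∫ t in c..x, g t) s := by
  have hderiv : ∀ x ∈ s, HasDerivAt (fun x => ∫ t in c..x, g t) (g x) x := fun x hx =>
    intervalIntegral.integral_hasDerivAt_right
      (hg.continuousOn.mono (hs'.uIcc_subset hc hx)).intervalIntegrable
      (hg.continuousOn.stronglyMeasurableAtFilter hs x hx) (hg x hx).continuousAt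
  exact fun x hx => (hg x hx).of_eventually_hasDerivAt
    (eventually_of_mem (hs.mem_nhds hx) hderiv)

lemma Real.sqrt_sub_one_eq_div {x : ℝ} (hx : 0 ≤ x) : √x - 1 = (x - 1) / (√x + 1) := by
  rw [eq_div_iff (by positivity)]
  nlinarith [Real.sq_sqrt hx]

namespace Stmt18

variable {M a Q : ℝ}

lemma Δ_eq_mul (hsub : a ^ 2 + Q ^ 2 ≤ M ^ 2) (r : ℝ) :
    Δ M a Q r = (r - rplus M a Q) * (r - rminus M a Q) := by
  have hs := Real.sq_sqrt (sub_nonneg.2 hsub)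
  simp only [Δ, rplus, rminus]
  linear_combination hs

lemma rminus_lt_rplus (hsub : a ^ 2 + Q ^ 2 < M ^ 2) : rminus M a Q < rplus M a Q := by
  have := Real.sqrt_pos.2 (sub_pos.2 hsub)
  simp only [rminus, rplus]
  linarith

lemma κplus_pos (ha : 0 < a) (hsub : a ^ 2 + Q ^ 2 < M ^ 2) : 0 < κplus M a Q :=
  div_pos (sub_pos.2 (rminus_lt_rplus hsub)) (by positivity)

lemma κminus_pos (ha : 0 < a) (hsub : a ^ 2 + Q ^ 2 < M ^ 2) : 0 < κminus M a Q :=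
  div_pos (sub_pos.2 (rminus_lt_rplus hsub)) (by positivity)

def radicand (M a Q r : ℝ) : ℝ := 1 - a ^ 2 * Δ M a Q r / (r ^ 2 + a ^ 2) ^ 2

lemma radicand_pos (hM : 0 < M) (ha : 0 < a) (hsub : a ^ 2 + Q ^ 2 < M ^ 2) {r : ℝ}
    (hr : rminus M a Q < r) : 0 < radicand M a Q r := by
  have hΔm : Δ M a Q (rminus M a Q) = 0 := by rw [Δ_eq_mul hsub.le]; ring
  have hQ : Q ^ 2 = 2 * M * rminus M a Q - rminus M a Q ^ 2 - a ^ 2 := by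
    simp only [Δ] at hΔm; linarith
  have hexpand : (r ^ 2 + a ^ 2) ^ 2 - a ^ 2 * Δ M a Q r
      = r ^ 4 + a ^ 2 * r ^ 2 + 2 * M * a ^ 2 * (r - rminus M a Q)
        + a ^ 2 * rminus M a Q ^ 2 + a ^ 4 := by
    simp only [Δ, hQ]; ring
  have hr' := sub_pos.2 hr
  have hpos : 0 < (r ^ 2 + a ^ 2) ^ 2 - a ^ 2 * Δ M a Q r := by rw [hexpand]; positivity
  rw [radicand, sub_pos, div_lt_one (by positivity)]
  linarith

/-- `fKN` with its numerator rationalised by `√radicand + 1`, which cancels the factor `Δ`. -/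
def fKNExt (M a Q r : ℝ) : ℝ := -a ^ 2 / ((r ^ 2 + a ^ 2) * (√(radicand M a Q r) + 1))

lemma analyticOnNhd_fKNExt (hM : 0 < M) (ha : 0 < a) (hsub : a ^ 2 + Q ^ 2 < M ^ 2) :
    AnalyticOnNhd ℝ (fKNExt M a Q) (Ioi (rminus M a Q)) := by
  intro r hr
  have hrad : AnalyticAt ℝ (radicand M a Q) r := by
    unfold radicand Δ
    fun_prop (disch := positivity)
  have hsqrt : AnalyticAt ℝ (fun t => √(radicand M a Q t)) r :=
    (contDiffAt_sqrt (radicand_pos hM ha hsub hr).ne' (n := ω)).analyticAt.comp hrad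
  unfold fKNExt
  exact analyticAt_const.div ((by fun_prop : AnalyticAt ℝ (fun t : ℝ => t ^ 2 + a ^ 2) r).mul
    (hsqrt.add analyticAt_const)) (by positivity)

lemma fKNExt_eq_fKN (hM : 0 < M) (ha : 0 < a) (hsub : a ^ 2 + Q ^ 2 < M ^ 2) {r : ℝ}
    (hr : rplus M a Q < r) : fKNExt M a Q r = fKN M a Q r := by
  have hΔ : 0 < Δ M a Q r := by
    rw [Δ_eq_mul hsub.le]
    exact mul_pos (sub_pos.2 hr) (sub_pos.2 ((rminus_lt_rplus hsub).trans hr))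
  have hrad := radicand_pos hM ha hsub ((rminus_lt_rplus hsub).trans hr)
  have hsqrt : 0 ≤ √(radicand M a Q r) := Real.sqrt_nonneg _
  rw [fKN, ← radicand, Real.sqrt_sub_one_eq_div hrad.le, fKNExt, radicand]
  field_simp
  ring

lemma kofr_eq (hM : 0 < M) (ha : 0 < a) (hsub : a ^ 2 + Q ^ 2 < M ^ 2) (R0 : ℝ) {r : ℝ}
    (hr : rplus M a Q < r) :
    kofr M a Q R0 r = rstar M a Q R0 r + ∫ τ in (rplus M a Q)..r, fKNExt M a Q τ := by
  rw [kofr, intervalIntegral.integral_congr_ae (MeasureTheory.ae_of_all _ fun τ hτ => ?_)]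
  rw [uIoc_of_le hr.le] at hτ
  exact fKNExt_eq_fKN hM ha hsub hτ.1 |>.symm

def kruskalExt (M a Q R0 r : ℝ) : ℝ :=
  exp (-2 * κplus M a Q * (r + R0)) * (r - rminus M a Q) ^ (κplus M a Q / κminus M a Q)
    * exp (-2 * κplus M a Q * ∫ τ in (rplus M a Q)..r, fKNExt M a Q τ)

lemma kruskalExt_eq (hM : 0 < M) (ha : 0 < a) (hsub : a ^ 2 + Q ^ 2 < M ^ 2) (R0 : ℝ) {r : ℝ}
    (hr : rplus M a Q < r) :
    kruskalExt M a Q R0 r = (r - rplus M a Q) * exp (-2 * κplus M a Q * kofr M a Q R0 r) := by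
  have hp := sub_pos.2 hr
  have hm := sub_pos.2 ((rminus_lt_rplus hsub).trans hr)
  have hκp := (κplus_pos ha hsub).ne'
  have hκm := (κminus_pos ha hsub).ne'
  have hexp : -2 * κplus M a Q * kofr M a Q R0 r
      = -2 * κplus M a Q * (r + R0) + log (r - rminus M a Q) * (κplus M a Q / κminus M a Q)
        + -2 * κplus M a Q * (∫ τ in (rplus M a Q)..r, fKNExt M a Q τ) - log (r - rplus M a Q) := by
    rw [kofr_eq hM ha hsub R0 hr, rstar]
    field_simp
    ring
  rw [hexp, exp_sub, exp_add, exp_add, exp_log hp, kruskalExt, rpow_def_of_pos hm]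
  field_simp

lemma kruskalExt_pos (R0 : ℝ) {r : ℝ} (hr : rminus M a Q < r) :
    0 < kruskalExt M a Q R0 r := by
  have := rpow_pos_of_pos (sub_pos.2 hr) (κplus M a Q / κminus M a Q)
  unfold kruskalExt
  positivity

lemma analyticOnNhd_kruskalExt (hM : 0 < M) (ha : 0 < a) (hsub : a ^ 2 + Q ^ 2 < M ^ 2)
    (R0 : ℝ) : AnalyticOnNhd ℝ (kruskalExt M a Q R0) (Ioi (rminus M a Q)) := by
  intro r hr
  have hpow : AnalyticAt ℝ (fun t => (t - rminus M a Q) ^ (κplus M a Q / κminus M a Q)) r :=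
    (contDiffAt_rpow_const_of_ne (sub_pos.2 hr).ne' (n := ω)).analyticAt.comp
      (f := fun t => t - rminus M a Q) (by fun_prop)
  have hint := (analyticOnNhd_fKNExt hM ha hsub).intervalIntegral isOpen_Ioi ordConnected_Ioi
    (rminus_lt_rplus hsub) r hr
  unfold kruskalExt
  fun_prop

theorem kruskal_analytic_extension (M a Q R0 : ℝ) (hM : 0 < M) (ha : 0 < a)
    (hsub : a ^ 2 + Q ^ 2 < M ^ 2) :
    -- f extends real-analytically across Δ = 0 to (r₋,∞) …
    ∃ g : ℝ → ℝ,
      AnalyticOnNhd ℝ g (Set.Ioi (rminus M a Q)) ∧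
      (∀ r : ℝ, rplus M a Q < r → g r = fKN M a Q r) ∧
      -- … the stated identity holds for r > r₊ …
      (∀ r : ℝ, rplus M a Q < r →
        (r - rplus M a Q) * Real.exp (-2 * κplus M a Q * kofr M a Q R0 r)
          = Real.exp (-2 * κplus M a Q * (r + R0))
            * (r - rminus M a Q) ^ (κplus M a Q / κminus M a Q)
            * Real.exp (-2 * κplus M a Q * ∫ τ in (rplus M a Q)..r, g τ)) ∧
      -- … and the Kruskal quantity extends analytically, without zeros
      ∃ L : ℝ → ℝ,
        AnalyticOnNhd ℝ L (Set.Ioi (rminus M a Q)) ∧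
        (∀ r ∈ Set.Ioi (rminus M a Q), 0 < L r) ∧
        ∀ r : ℝ, rplus M a Q < r →
          L r = (r - rplus M a Q)
            * Real.exp (-2 * κplus M a Q * kofr M a Q R0 r) := by
  refine ⟨fKNExt M a Q, analyticOnNhd_fKNExt hM ha hsub, fun r hr => fKNExt_eq_fKN hM ha hsub hr,
    fun r hr => (kruskalExt_eq hM ha hsub R0 hr).symm, kruskalExt M a Q R0,
    analyticOnNhd_kruskalExt hM ha hsub R0, fun r hr => kruskalExt_pos R0 hr,
    fun r hr => kruskalExt_eq hM ha hsub R0 hr⟩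

end Stmt18
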